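/- arXiv:2206.02449 — 5 statements merged into one kernel-verified Lean document; each statement's English description precedes it below -/
import Mathlib

section
/- Suppose Q is absolutely continuous with respect to P on ℋ_A = ℋ ∨ σ({A₁}) and that there exists an ℋ-measurable density h ≥ 0 of Q|ℋ_A with respect to P|ℋ_A (i.e. Q[M] = E_P[h·1_M] for all M ∈ ℋ_A). Then P and Q are related by covariate shift with respect to ℋ: any version Ψ of P[A₁ | ℋ] satisfies Q[A₁ ∩ H] = E_Q[Ψ·1_H] for all H ∈ ℋ. -/
open MeasureTheory Set

/-- `Ψ` is an `m`-measurable version of the conditional probability of `A` given `m` under `P`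
(a measure on the ambient σ-algebra `mΩ`): for every `m`-measurable `H`,
`P (A ∩ H) = ∫_H Ψ dP`. -/
def IsCondVersion {Ω : Type*} [mΩ : MeasurableSpace Ω] (m : MeasurableSpace Ω)
    (P : @Measure Ω mΩ) (A : Set Ω) (Ψ : Ω → ℝ) : Prop :=
  Measurable[m] Ψ ∧
  ∀ H : Set Ω, MeasurableSet[m] H → (P (A ∩ H)).toReal = ∫ ω in H, Ψ ω ∂P

/-- `P` and `Q` are related by covariate shift w.r.t. the sub-σ-algebra `m`: there is a common
`m`-measurable `[0,1]`-valued version `Ψ` of the conditional probability of `A` given `m`. -/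
def CovShift {Ω : Type*} [mΩ : MeasurableSpace Ω] (m : MeasurableSpace Ω)
    (P Q : @Measure Ω mΩ) (A : Set Ω) : Prop :=
  ∃ Ψ : Ω → ℝ, (∀ ω, Ψ ω ∈ Set.Icc (0 : ℝ) 1) ∧
    @IsCondVersion Ω mΩ m P A Ψ ∧ @IsCondVersion Ω mΩ m Q A Ψ

/-! On `ℋ` the measure `Q` has the `ℋ`-measurable density `h` with respect to `P`, so
`Q[A₁ ∩ H] = E_P[h 1_H 1_{A₁}] = E_P[h 1_H Ψ] = E_Q[Ψ 1_H]`, the middle step pulling the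
`ℋ`-measurable factor `h 1_H` out of `P[1_{A₁} | ℋ] = Ψ`. The one subtlety is that a version `Ψ`
is not assumed integrable, and Bochner integrals of non-integrable functions are `0`: testing `Ψ`
on the `ℋ`-sets where it is bounded but lies outside `[0, 1]` shows that these sets are null. -/

open Filter Function

variable {Ω : Type*} {m mΩ : MeasurableSpace Ω}

lemma measure_eq_zero_of_pos_of_setIntegral_nonpos {μ : Measure Ω} {f : Ω → ℝ} {s : Set Ω}
    (hs : MeasurableSet s) (hf : IntegrableOn f s μ) (hpos : ∀ ω ∈ s, 0 < f ω)
    (hint : ∫ ω in s, f ω ∂μ ≤ 0) : μ s = 0 := by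
  by_contra hμs
  have hsupp : support f ∩ s = s := inter_eq_right.2 fun ω hω => (hpos ω hω).ne'
  have : 0 < ∫ ω in s, f ω ∂μ := by
    rw [setIntegral_pos_iff_support_of_nonneg_ae
      (ae_restrict_of_forall_mem hs fun ω hω => (hpos ω hω).le) hf, hsupp]
    exact pos_iff_ne_zero.2 hμs
  linarith

lemma ae_of_forall_measure_abs_le_eq_zero {μ : Measure Ω} {f : Ω → ℝ} {p : ℝ → Prop}
    (h : ∀ n : ℕ, μ {ω | ¬ p (f ω) ∧ |f ω| ≤ n} = 0) : ∀ᵐ ω ∂μ, p (f ω) := by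
  refine measure_mono_null (fun ω hω => mem_iUnion.2 ?_) (measure_iUnion_null h)
  obtain ⟨n, hn⟩ := exists_nat_ge |f ω|
  exact ⟨n, hω, hn⟩

lemma integral_eq_integral_mul_of_setIntegral_eq (hm : m ≤ mΩ) {P Q : Measure Ω}
    [IsFiniteMeasure Q] {h : Ω → ℝ} (hh : Measurable h) (hh0 : ∀ ω, 0 ≤ h ω)
    (hint : Integrable h P) (hdens : ∀ M, MeasurableSet[m] M → (Q M).toReal = ∫ ω in M, h ω ∂P)
    {φ : Ω → ℝ} (hφ : StronglyMeasurable[m] φ) : ∫ ω, φ ω ∂Q = ∫ ω, h ω * φ ω ∂P := by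
  set W := P.withDensity fun ω => ENNReal.ofReal (h ω)
  have htrim : Q.trim hm = W.trim hm := by
    refine @Measure.ext Ω m _ _ fun s hs => ?_
    rw [trim_measurableSet_eq hm hs, trim_measurableSet_eq hm hs, withDensity_apply _ (hm s hs),
      ← ofReal_integral_eq_lintegral_ofReal hint.integrableOn (ae_of_all _ hh0), ← hdens s hs,
      ENNReal.ofReal_toReal (measure_ne_top Q s)]
  calc ∫ ω, φ ω ∂Q = ∫ ω, φ ω ∂W := by
        rw [integral_trim hm hφ, htrim, ← integral_trim hm hφ]
    _ = ∫ ω, h ω * φ ω ∂P := by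
        rw [integral_withDensity_eq_integral_toReal_smul hh.ennreal_ofReal
          (ae_of_all _ fun _ => ENNReal.ofReal_lt_top)]
        simp only [ENNReal.toReal_ofReal (hh0 _), smul_eq_mul]

namespace IsCondVersion

variable {P Q : Measure Ω} [IsFiniteMeasure P] {A : Set Ω} {Ψ : Ω → ℝ}

lemma integrableOn_of_abs_le (hm : m ≤ mΩ) (hΨ : IsCondVersion m P A Ψ) {s : Set Ω} {n : ℝ}
    (hs : MeasurableSet s) (hbound : ∀ ω ∈ s, |Ψ ω| ≤ n) : IntegrableOn Ψ s P :=
  Measure.integrableOn_of_bounded (measure_ne_top P s)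
    (hΨ.1.mono hm le_rfl).aestronglyMeasurable (ae_restrict_of_forall_mem hs hbound)

lemma ae_nonneg (hm : m ≤ mΩ) (hΨ : IsCondVersion m P A Ψ) : ∀ᵐ ω ∂P, 0 ≤ Ψ ω := by
  refine ae_of_forall_measure_abs_le_eq_zero fun n => ?_
  set s := {ω | ¬ 0 ≤ Ψ ω ∧ |Ψ ω| ≤ n}
  have hs : MeasurableSet[m] s :=
    hΨ.1 (by measurability : MeasurableSet {x : ℝ | ¬ 0 ≤ x ∧ |x| ≤ n})
  refine measure_eq_zero_of_pos_of_setIntegral_nonpos (hm s hs)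
    (hΨ.integrableOn_of_abs_le hm (hm s hs) fun ω hω => hω.2).neg
    (fun ω hω => neg_pos.2 (not_le.1 hω.1)) ?_
  rw [integral_neg', ← hΨ.2 s hs, neg_nonpos]
  exact ENNReal.toReal_nonneg

lemma ae_le_one (hm : m ≤ mΩ) (hΨ : IsCondVersion m P A Ψ) : ∀ᵐ ω ∂P, Ψ ω ≤ 1 := by
  refine ae_of_forall_measure_abs_le_eq_zero (p := (· ≤ 1)) fun n => ?_
  set s := {ω | ¬ Ψ ω ≤ 1 ∧ |Ψ ω| ≤ n}
  have hs : MeasurableSet[m] s :=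
    hΨ.1 (by measurability : MeasurableSet {x : ℝ | ¬ x ≤ 1 ∧ |x| ≤ n})
  have hΨs : IntegrableOn Ψ s P := hΨ.integrableOn_of_abs_le hm (hm s hs) fun ω hω => hω.2
  refine measure_eq_zero_of_pos_of_setIntegral_nonpos (hm s hs)
    (f := fun ω => Ψ ω - 1) (hΨs.sub (integrableOn_const (C := (1 : ℝ))))
    (fun ω hω => sub_pos.2 (not_le.1 hω.1)) ?_
  rw [integral_sub hΨs (integrableOn_const (C := (1 : ℝ))), ← hΨ.2 s hs, setIntegral_const,
    smul_eq_mul, mul_one, sub_nonpos]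
  exact measureReal_mono inter_subset_right

lemma integrable (hm : m ≤ mΩ) (hΨ : IsCondVersion m P A Ψ) : Integrable Ψ P :=
  Integrable.of_bound (hΨ.1.mono hm le_rfl).aestronglyMeasurable 1 <| by
    filter_upwards [hΨ.ae_nonneg hm, hΨ.ae_le_one hm] with ω h0 h1
    rwa [Real.norm_eq_abs, abs_of_nonneg h0]

lemma ae_eq_condExp (hm : m ≤ mΩ) (hA : MeasurableSet A) (hΨ : IsCondVersion m P A Ψ) :
    Ψ =ᵐ[P] P[A.indicator (1 : Ω → ℝ)|m] := by
  refine ae_eq_condExp_of_forall_setIntegral_eq hm ((integrable_const 1).indicator hA)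
    (fun s _ _ => (hΨ.integrable hm).integrableOn) (fun s hs _ => ?_)
    (hΨ.1.stronglyMeasurable.aestronglyMeasurable)
  rw [← hΨ.2 s hs, integral_indicator_one hA, measureReal_restrict_apply hA, measureReal_def]

lemma setIntegral_eq_integral_mul (hm : m ≤ mΩ) (hA : MeasurableSet A)
    (hΨ : IsCondVersion m P A Ψ) {g : Ω → ℝ} (hg : StronglyMeasurable[m] g)
    (hgi : Integrable g P) : ∫ ω in A, g ω ∂P = ∫ ω, g ω * Ψ ω ∂P := by
  have hprod : g * A.indicator (1 : Ω → ℝ) = A.indicator g := by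
    ext ω; by_cases hω : ω ∈ A <;> simp [hω]
  have hgA : Integrable (g * A.indicator (1 : Ω → ℝ)) P := hprod ▸ hgi.indicator hA
  calc ∫ ω in A, g ω ∂P = ∫ ω, (g * A.indicator (1 : Ω → ℝ)) ω ∂P := by
        rw [hprod, integral_indicator hA]
    _ = ∫ ω, P[g * A.indicator (1 : Ω → ℝ)|m] ω ∂P := (integral_condExp hm).symm
    _ = ∫ ω, g ω * Ψ ω ∂P := by
        refine integral_congr_ae ?_
        filter_upwards [condExp_mul_of_stronglyMeasurable_left hg hgA
          ((integrable_const 1).indicator hA), hΨ.ae_eq_condExp hm hA] with ω hω hΨω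
        rw [hω, Pi.mul_apply, hΨω]

lemma of_density (hm : m ≤ mΩ) [IsFiniteMeasure Q] (hA : MeasurableSet A)
    (hΨ : IsCondVersion m P A Ψ) {h : Ω → ℝ} (hh : Measurable[m] h) (hh0 : ∀ ω, 0 ≤ h ω)
    (hint : Integrable h P)
    (hdens : ∀ M, MeasurableSet[m ⊔ MeasurableSpace.generateFrom {A}] M →
      (Q M).toReal = ∫ ω in M, h ω ∂P) :
    IsCondVersion m Q A Ψ := by
  have hle : m ≤ m ⊔ MeasurableSpace.generateFrom {A} := le_sup_left
  have hA' : MeasurableSet[m ⊔ MeasurableSpace.generateFrom {A}] A :=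
    le_sup_right (a := m) _ (MeasurableSpace.measurableSet_generateFrom (mem_singleton A))
  refine ⟨hΨ.1, fun H hH => ?_⟩
  calc (Q (A ∩ H)).toReal = ∫ ω in A, H.indicator h ω ∂P := by
        rw [hdens _ (hA'.inter (hle H hH)), setIntegral_indicator (hm H hH)]
    _ = ∫ ω, H.indicator h ω * Ψ ω ∂P :=
        hΨ.setIntegral_eq_integral_mul hm hA (hh.stronglyMeasurable.indicator hH)
          (hint.indicator (hm H hH))
    _ = ∫ ω, h ω * H.indicator Ψ ω ∂P := by
        congr 1; ext ω; by_cases hω : ω ∈ H <;> simp [hω]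
    _ = ∫ ω in H, Ψ ω ∂Q := by
        rw [← integral_indicator (hm H hH), integral_eq_integral_mul_of_setIntegral_eq hm
          (hh.mono hm le_rfl) hh0 hint (fun M hM => hdens M (hle M hM))
          (hΨ.1.stronglyMeasurable.indicator hH)]

end IsCondVersion

theorem stmt6_general {Ω : Type} [mΩ : MeasurableSpace Ω] {m : MeasurableSpace Ω} (hm : m ≤ mΩ)
    (A₁ : Set Ω) (hA₁ : MeasurableSet[mΩ] A₁)
    (P Q : @Measure Ω mΩ) (hP : @IsProbabilityMeasure Ω mΩ P)
    (hQ : @IsProbabilityMeasure Ω mΩ Q)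
    (h : Ω → ℝ) (hmeas : Measurable[m] h) (hnonneg : ∀ ω, 0 ≤ h ω)
    (hdens : ∀ M : Set Ω, MeasurableSet[m ⊔ MeasurableSpace.generateFrom {A₁}] M →
      (Q M).toReal = ∫ ω in M, h ω ∂P)
    (Ψ : Ω → ℝ) (hΨ : @IsCondVersion Ω mΩ m P A₁ Ψ) :
    @IsCondVersion Ω mΩ m Q A₁ Ψ := by
  have hint_one : ∫ ω, h ω ∂P = 1 := by simpa using (hdens univ MeasurableSet.univ).symm
  have hint : Integrable h P := .of_integral_ne_zero (hint_one ▸ one_ne_zero)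
  exact hΨ.of_density hm hA₁ hmeas hnonneg hint hdens

/-- If `Q` has an `ℋ`-measurable density `h` w.r.t. `P` on `ℋ_A = ℋ ∨ σ({A₁})`, then `P` and
`Q` are related by covariate shift w.r.t. `ℋ`: any version `Ψ` of `P[A₁ | ℋ]` is also a
version of `Q[A₁ | ℋ]`. -/
theorem stmt6 {Ω : Type} [mΩ : MeasurableSpace Ω] {m : MeasurableSpace Ω} (hm : m ≤ mΩ)
    (A₁ : Set Ω) (hA₁ : MeasurableSet[mΩ] A₁) (hA₁m : ¬ MeasurableSet[m] A₁)
    (P Q : @Measure Ω mΩ) (hP : @IsProbabilityMeasure Ω mΩ P)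
    (hQ : @IsProbabilityMeasure Ω mΩ Q)
    (hpos : 0 < P A₁) (hlt : P A₁ < 1)
    (h : Ω → ℝ) (hmeas : Measurable[m] h) (hnonneg : ∀ ω, 0 ≤ h ω)
    (hdens : ∀ M : Set Ω, MeasurableSet[m ⊔ MeasurableSpace.generateFrom {A₁}] M →
      (Q M).toReal = ∫ ω in M, h ω ∂P)
    (Ψ : Ω → ℝ) (hΨ : @IsCondVersion Ω mΩ m P A₁ Ψ) :
    @IsCondVersion Ω mΩ m Q A₁ Ψ :=
  stmt6_general (mΩ := mΩ) hm A₁ hA₁ P Q hP hQ h hmeas hnonneg hdens Ψ hΨ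
end

section
/- Let P and Q satisfy Q[A₁ | ℋ] = f(P[A₁ | ℋ]) Q-almost surely for a measurable increasing function f : [0,1] → ℝ (covariate shift with posterior drift). Let 𝒢 ⊆ ℋ be a sub-σ-algebra that is sufficient for ℋ with respect to A₁ under P (i.e. P[A₁ | 𝒢] = P[A₁ | ℋ] P-a.s.), and assume Q is absolutely continuous with respect to P on ℋ. Then Q[A₁ | 𝒢] = f(P[A₁ | 𝒢]) Q-almost surely. -/
open MeasureTheory Set

/-- `Q` is absolutely continuous w.r.t. `P` on the sub-σ-algebra `m`. -/
def AbsContOn {Ω : Type*} [mΩ : MeasurableSpace Ω] (m : MeasurableSpace Ω)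
    (P Q : @Measure Ω mΩ) : Prop :=
  ∀ N : Set Ω, MeasurableSet[m] N → P N = 0 → Q N = 0

/-- `C*_A(P, m)`: the probability measures `Q` absolutely continuous w.r.t. `P` on `m` that are
related to `P` by covariate shift w.r.t. `m`. -/
def CAstar {Ω : Type*} [mΩ : MeasurableSpace Ω] (m : MeasurableSpace Ω)
    (P : @Measure Ω mΩ) (A : Set Ω) : Set (@Measure Ω mΩ) :=
  {Q | @IsProbabilityMeasure Ω mΩ Q ∧ @AbsContOn Ω mΩ m P Q ∧ @CovShift Ω mΩ m P Q A}

/-- Covariate shift with posterior drift is inherited by sufficient sub-σ-algebras: if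
`Q[A₁ | ℋ] = f(P[A₁ | ℋ])` for an increasing `f`, `𝒢 ⊆ ℋ` is sufficient for `ℋ` w.r.t. `A₁`
(i.e. a version `ΨG` of `P[A₁ | 𝒢]` agrees `P`-a.s. with the version `ΨH` of `P[A₁ | ℋ]`),
and `Q ≪ P` on `ℋ`, then `Q[A₁ | 𝒢] = f(P[A₁ | 𝒢])`. -/
theorem stmt7 {Ω : Type} [mΩ : MeasurableSpace Ω]
    {G H : MeasurableSpace Ω} (hGH : G ≤ H) (hH : H ≤ mΩ)
    (A₁ : Set Ω) (hA₁ : MeasurableSet[mΩ] A₁)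
    (P Q : @Measure Ω mΩ) (hP : @IsProbabilityMeasure Ω mΩ P)
    (hQ : @IsProbabilityMeasure Ω mΩ Q)
    (f : ℝ → ℝ) (hf : MonotoneOn f (Set.Icc (0 : ℝ) 1)) (hfm : Measurable f)
    (ΨH : Ω → ℝ) (hΨHrange : ∀ ω, ΨH ω ∈ Set.Icc (0 : ℝ) 1)
    (hΨH : @IsCondVersion Ω mΩ H P A₁ ΨH)
    (hdrift : @IsCondVersion Ω mΩ H Q A₁ (f ∘ ΨH))
    (ΨG : Ω → ℝ) (hΨGrange : ∀ ω, ΨG ω ∈ Set.Icc (0 : ℝ) 1)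
    (hΨG : @IsCondVersion Ω mΩ G P A₁ ΨG)
    (hsuff : ΨG =ᵐ[P] ΨH)
    (hac : @AbsContOn Ω mΩ H P Q) :
    @IsCondVersion Ω mΩ G Q A₁ (f ∘ ΨG) := by
  have hΨGH : Measurable[H] ΨG := hΨG.1.mono hGH le_rfl
  have hN : MeasurableSet[H] {ω | ΨG ω ≠ ΨH ω} :=
    (measurableSet_eq_fun hΨGH hΨH.1).compl
  have hPN : P {ω | ΨG ω ≠ ΨH ω} = 0 := hsuff
  have hQN : Q {ω | ΨG ω ≠ ΨH ω} = 0 := hac _ hN hPN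
  have hQeq : ΨG =ᵐ[Q] ΨH := hQN
  have hQfeq : (f ∘ ΨG) =ᵐ[Q] (f ∘ ΨH) := hQeq.mono fun ω h => by
    simp [Function.comp, h]
  refine ⟨hfm.comp hΨG.1, fun H₀ hH₀ => ?_⟩
  rw [hdrift.2 H₀ (hGH _ hH₀)]
  exact (integral_congr_ae (Filter.EventuallyEq.restrict hQfeq)).symm
end

section
/- Special case of posterior-drift inheritance (f = identity): if P and Q are related by covariate shift with respect to ℋ, Q is absolutely continuous with respect to P on ℋ, and 𝒢 ⊆ ℋ satisfies P[A₁ | 𝒢] = P[A₁ | ℋ] P-a.s. (sufficiency), then P and Q are related by covariate shift with respect to 𝒢, i.e. Q[A₁ | 𝒢] = P[A₁ | 𝒢] holds Q-a.s. -/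
open MeasureTheory Set

/-- Posterior-drift inheritance with `f = id`: if `P` and `Q` are related by covariate shift
w.r.t. `ℋ` with common version `ΨH`, `Q ≪ P` on `ℋ`, and `𝒢 ⊆ ℋ` is sufficient
(a `𝒢`-version `ΨG` of `P[A₁ | 𝒢]` agrees `P`-a.s. with `ΨH`), then `P` and `Q` are related
by covariate shift w.r.t. `𝒢`, with `ΨG` a common version. -/
theorem stmt8 {Ω : Type} [mΩ : MeasurableSpace Ω]
    {G H : MeasurableSpace Ω} (hGH : G ≤ H) (hH : H ≤ mΩ)
    (A₁ : Set Ω) (hA₁ : MeasurableSet[mΩ] A₁)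
    (P Q : @Measure Ω mΩ) (hP : @IsProbabilityMeasure Ω mΩ P)
    (hQ : @IsProbabilityMeasure Ω mΩ Q)
    (ΨH : Ω → ℝ) (hΨHrange : ∀ ω, ΨH ω ∈ Set.Icc (0 : ℝ) 1)
    (hΨHP : @IsCondVersion Ω mΩ H P A₁ ΨH) (hΨHQ : @IsCondVersion Ω mΩ H Q A₁ ΨH)
    (hac : @AbsContOn Ω mΩ H P Q)
    (ΨG : Ω → ℝ) (hΨGrange : ∀ ω, ΨG ω ∈ Set.Icc (0 : ℝ) 1)
    (hΨG : @IsCondVersion Ω mΩ G P A₁ ΨG)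
    (hsuff : ΨG =ᵐ[P] ΨH) :
    @IsCondVersion Ω mΩ G Q A₁ ΨG ∧ @CovShift Ω mΩ G P Q A₁ := by
  -- The disagreement set is H-measurable and P-null, hence Q-null.
  have hGmeas : Measurable[H] ΨG := hΨG.1.mono hGH le_rfl
  have hN : MeasurableSet[H] {ω | ΨG ω ≠ ΨH ω} :=
    @MeasurableSet.compl Ω _ H (measurableSet_eq_fun (m := H) hGmeas hΨHQ.1)
  have hPN : P {ω | ΨG ω ≠ ΨH ω} = 0 := by
    simpa [Filter.EventuallyEq, ae_iff] using hsuff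
  have hQN : Q {ω | ΨG ω ≠ ΨH ω} = 0 := hac _ hN hPN
  have hsuffQ : ΨG =ᵐ[Q] ΨH := by
    rw [Filter.EventuallyEq, ae_iff]
    simpa using hQN
  have hcond : @IsCondVersion Ω mΩ G Q A₁ ΨG := by
    refine ⟨hΨG.1, fun S hS => ?_⟩
    have hSH : MeasurableSet[H] S := hGH S hS
    have hSm : MeasurableSet[mΩ] S := hH S hSH
    rw [hΨHQ.2 S hSH]
    exact @setIntegral_congr_ae Ω ℝ mΩ _ _ ΨH ΨG S Q hSm
      (hsuffQ.mono fun ω h _ => h.symm)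
  exact ⟨hcond, ⟨ΨG, hΨGrange, hΨG, hcond⟩⟩
end

section
/- Let T : (Ω, ℋ) → (Ω_T, ℋ_T) be measurable and suppose: (a) P[A₁ | σ(T)] = P[A₁ | ℋ] and Q[A₁ | σ(T)] = Q[A₁ | ℋ], and (b) P[A_i ∩ {T ∈ M}] = Q[A_i ∩ {T ∈ M}] for i ∈ {0,1} and all M ∈ ℋ_T. Then P and Q are related by covariate shift with respect to ℋ, i.e. P[A₁ | ℋ] = Q[A₁ | ℋ] (there is a common ℋ-measurable version). -/
open MeasureTheory Set

/-! The `σ(T)`-version `ΦP` of `P[A₁ | ℋ]` is a common version. By (b), `P` and `Q` agree on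
`σ(T)` and on the sets `A₁ ∩ S` with `S ∈ σ(T)`, so `ΦP` is also a `σ(T)`-version for `Q`. By
uniqueness of such versions it equals `ΦQ` `Q`-a.e., and `ΦQ` is an `ℋ`-version for `Q`. -/

variable {Ω : Type*} {m mΩ : MeasurableSpace Ω} {μ ν : Measure[mΩ] Ω}
  {A : Set Ω} {Φ Ψ : Ω → ℝ}

theorem MeasureTheory.Measure.trim_eq_of_inter_eq_of_compl_inter_eq (hm : m ≤ mΩ)
    (hA : MeasurableSet A)
    (h : ∀ S, MeasurableSet[m] S → μ (A ∩ S) = ν (A ∩ S))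
    (hc : ∀ S, MeasurableSet[m] S → μ (Aᶜ ∩ S) = ν (Aᶜ ∩ S)) :
    μ.trim hm = ν.trim hm := by
  refine @Measure.ext _ m _ _ fun S hS => ?_
  have hsplit (ρ : Measure Ω) : ρ S = ρ (A ∩ S) + ρ (Aᶜ ∩ S) := by
    rw [← measure_inter_add_sdiff S hA, inter_comm, sdiff_eq, inter_comm S]
  rw [trim_measurableSet_eq hm hS, trim_measurableSet_eq hm hS, hsplit μ, hsplit ν, h S hS,
    hc S hS]

theorem setIntegral_eq_of_trim_eq (hm : m ≤ mΩ) (htrim : μ.trim hm = ν.trim hm)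
    (hΦ : StronglyMeasurable[m] Φ) {S : Set Ω} (hS : MeasurableSet[m] S) :
    ∫ ω in S, Φ ω ∂μ = ∫ ω in S, Φ ω ∂ν := by
  rw [setIntegral_trim hm hΦ hS, setIntegral_trim hm hΦ hS, htrim]

namespace IsCondVersion

theorem of_trim_eq (hm : m ≤ mΩ) (htrim : μ.trim hm = ν.trim hm)
    (hA : ∀ S, MeasurableSet[m] S → μ (A ∩ S) = ν (A ∩ S)) (h : IsCondVersion m μ A Φ) :
    IsCondVersion m ν A Φ :=
  ⟨h.1, fun S hS => by
    rw [← hA S hS, h.2 S hS, setIntegral_eq_of_trim_eq hm htrim h.1.stronglyMeasurable hS]⟩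

theorem integrable_s14 (hm : m ≤ mΩ) [IsFiniteMeasure μ] (h : IsCondVersion m μ A Φ)
    (hΦ : ∀ ω, Φ ω ∈ Icc (0 : ℝ) 1) : Integrable Φ μ :=
  .of_bound (h.1.mono hm le_rfl).aestronglyMeasurable 1
    (.of_forall fun ω => abs_le.2 ⟨by linarith [(hΦ ω).1], (hΦ ω).2⟩)

theorem ae_eq (hm : m ≤ mΩ) [IsFiniteMeasure μ] (hΦ : IsCondVersion m μ A Φ)
    (hΨ : IsCondVersion m μ A Ψ) (hΦi : Integrable Φ μ) (hΨi : Integrable Ψ μ) :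
    Φ =ᵐ[μ] Ψ :=
  ae_eq_of_forall_setIntegral_eq_of_sigmaFinite' hm (fun _ _ _ => hΦi.integrableOn)
    (fun _ _ _ => hΨi.integrableOn) (fun S hS _ => (hΦ.2 S hS).symm.trans (hΨ.2 S hS))
    hΦ.1.stronglyMeasurable.aestronglyMeasurable hΨ.1.stronglyMeasurable.aestronglyMeasurable

theorem congr_ae (hm : m ≤ mΩ) (hΨ : IsCondVersion m μ A Ψ) (hΦ : Measurable[m] Φ)
    (hae : Φ =ᵐ[μ] Ψ) : IsCondVersion m μ A Φ :=
  ⟨hΦ, fun H hH => by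
    rw [hΨ.2 H hH]
    exact setIntegral_congr_ae (hm H hH) (hae.mono fun ω h _ => h.symm)⟩

end IsCondVersion

theorem stmt14_general {Ω : Type} [mΩ : MeasurableSpace Ω] {m : MeasurableSpace Ω} (hm : m ≤ mΩ)
    {ΩT : Type} [mT : MeasurableSpace ΩT] (T : Ω → ΩT) (hT : @Measurable Ω ΩT m mT T)
    (A₁ : Set Ω) (hA₁ : MeasurableSet[mΩ] A₁)
    (P Q : @Measure Ω mΩ)
    (hQ : @IsProbabilityMeasure Ω mΩ Q)
    (ha : ∃ ΦP : Ω → ℝ, (∀ ω, ΦP ω ∈ Set.Icc (0 : ℝ) 1) ∧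
      @IsCondVersion Ω mΩ (mT.comap T) P A₁ ΦP ∧ @IsCondVersion Ω mΩ m P A₁ ΦP)
    (ha' : ∃ ΦQ : Ω → ℝ, (∀ ω, ΦQ ω ∈ Set.Icc (0 : ℝ) 1) ∧
      @IsCondVersion Ω mΩ (mT.comap T) Q A₁ ΦQ ∧ @IsCondVersion Ω mΩ m Q A₁ ΦQ)
    (hb : ∀ M : Set ΩT, MeasurableSet[mT] M →
      P (A₁ ∩ T ⁻¹' M) = Q (A₁ ∩ T ⁻¹' M) ∧ P (A₁ᶜ ∩ T ⁻¹' M) = Q (A₁ᶜ ∩ T ⁻¹' M)) :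
    @CovShift Ω mΩ m P Q A₁ := by
  obtain ⟨ΦP, hΦP01, hPσ, hPm⟩ := ha
  obtain ⟨ΦQ, hΦQ01, hQσ, hQm⟩ := ha'
  have hσ : mT.comap T ≤ mΩ := hT.comap_le.trans hm
  have hinter : ∀ S, MeasurableSet[mT.comap T] S → P (A₁ ∩ S) = Q (A₁ ∩ S) := by
    rintro _ ⟨M, hM, rfl⟩
    exact (hb M hM).1
  have htrim : P.trim hσ = Q.trim hσ :=
    Measure.trim_eq_of_inter_eq_of_compl_inter_eq hσ hA₁ hinter
      fun _ ⟨M, hM, hS⟩ => hS ▸ (hb M hM).2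
  have hPQσ : IsCondVersion (mΩ := mΩ) (mT.comap T) Q A₁ ΦP :=
    hPσ.of_trim_eq hσ htrim hinter
  have hae : ΦP =ᵐ[Q] ΦQ :=
    hPQσ.ae_eq hσ hQσ (hPQσ.integrable_s14 hσ hΦP01) (hQσ.integrable_s14 hσ hΦQ01)
  exact ⟨ΦP, hΦP01, hPm, hQm.congr_ae hm hPm.1 hae⟩

/-- Observation of He et al.: if (a) `P[A₁ | σ(T)] = P[A₁ | ℋ]` and `Q[A₁ | σ(T)] = Q[A₁ | ℋ]`
(common versions exist), and (b) `P[Aᵢ ∩ {T ∈ M}] = Q[Aᵢ ∩ {T ∈ M}]` for `i ∈ {0,1}` and all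
measurable `M`, then `P` and `Q` are related by covariate shift w.r.t. `ℋ`. -/
theorem stmt14 {Ω : Type} [mΩ : MeasurableSpace Ω] {m : MeasurableSpace Ω} (hm : m ≤ mΩ)
    {ΩT : Type} [mT : MeasurableSpace ΩT] (T : Ω → ΩT) (hT : @Measurable Ω ΩT m mT T)
    (A₁ : Set Ω) (hA₁ : MeasurableSet[mΩ] A₁)
    (P Q : @Measure Ω mΩ) (hP : @IsProbabilityMeasure Ω mΩ P)
    (hQ : @IsProbabilityMeasure Ω mΩ Q)
    (ha : ∃ ΦP : Ω → ℝ, (∀ ω, ΦP ω ∈ Set.Icc (0 : ℝ) 1) ∧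
      @IsCondVersion Ω mΩ (mT.comap T) P A₁ ΦP ∧ @IsCondVersion Ω mΩ m P A₁ ΦP)
    (ha' : ∃ ΦQ : Ω → ℝ, (∀ ω, ΦQ ω ∈ Set.Icc (0 : ℝ) 1) ∧
      @IsCondVersion Ω mΩ (mT.comap T) Q A₁ ΦQ ∧ @IsCondVersion Ω mΩ m Q A₁ ΦQ)
    (hb : ∀ M : Set ΩT, MeasurableSet[mT] M →
      P (A₁ ∩ T ⁻¹' M) = Q (A₁ ∩ T ⁻¹' M) ∧ P (A₁ᶜ ∩ T ⁻¹' M) = Q (A₁ᶜ ∩ T ⁻¹' M)) :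
    @CovShift Ω mΩ m P Q A₁ :=
  stmt14_general (mΩ := mΩ) hm (mT := mT) T hT A₁ hA₁ P Q hQ ha ha' hb
end

section
/- Condition (b) alone in the previous setting implies covariate shift with respect to σ(T): if P[A₁ ∩ G] = Q[A₁ ∩ G] and P[G] = Q[G] for all G ∈ σ(T), then P and Q admit a common σ(T)-measurable version of the conditional probability of A₁ given σ(T). -/
/-!
A σ(T)-measurable version of `P[1_{A₁} | σ(T)]`, clamped to `[0, 1]`, serves for both measures:
`P` and `Q` agree on σ(T), so a σ(T)-measurable function has the same integrals under `P` and `Q`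
over σ(T)-sets, and `P[A₁ ∩ G] = Q[A₁ ∩ G]` identifies the left-hand sides.
-/

open MeasureTheory Set

namespace MeasureTheory

variable {Ω : Type*} {m : MeasurableSpace Ω} [mΩ : MeasurableSpace Ω]

theorem Measure.trim_eq_trim_of_forall_measurableSet_eq (hm : m ≤ mΩ) {P Q : Measure Ω}
    (hPQ : ∀ s, MeasurableSet[m] s → P s = Q s) : P.trim hm = Q.trim hm :=
  @Measure.ext _ m _ _ fun s hs => by
    rw [trim_measurableSet_eq hm hs, trim_measurableSet_eq hm hs, hPQ s hs]

theorem setIntegral_eq_of_forall_measurableSet_eq {E : Type*} [NormedAddCommGroup E]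
    [NormedSpace ℝ E] (hm : m ≤ mΩ) {P Q : Measure Ω}
    (hPQ : ∀ s, MeasurableSet[m] s → P s = Q s) {f : Ω → E} (hf : StronglyMeasurable[m] f)
    {H : Set Ω} (hH : MeasurableSet[m] H) : ∫ ω in H, f ω ∂P = ∫ ω in H, f ω ∂Q := by
  rw [setIntegral_trim hm hf hH, setIntegral_trim hm hf hH,
    Measure.trim_eq_trim_of_forall_measurableSet_eq hm hPQ]

theorem condExp_indicator_one_mem_Icc (P : Measure Ω) [IsFiniteMeasure P] {A : Set Ω}
    (hA : MeasurableSet A) :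
    ∀ᵐ ω ∂P, P[A.indicator 1 | m] ω ∈ Icc (0 : ℝ) 1 := by
  by_cases hm : m ≤ mΩ
  swap
  · simp [condExp_of_not_le hm]
  have h_nonneg : 0 ≤ᵐ[P] P[A.indicator (1 : Ω → ℝ) | m] :=
    condExp_nonneg (.of_forall (indicator_nonneg fun _ _ => zero_le_one))
  have h_le_one : P[A.indicator (1 : Ω → ℝ) | m] ≤ᵐ[P] 1 := by
    calc P[A.indicator (1 : Ω → ℝ) | m]
        ≤ᵐ[P] P[1 | m] := condExp_mono ((integrable_const 1).indicator hA) (integrable_const 1)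
          (.of_forall (indicator_le_self' fun _ _ => zero_le_one))
      _ = 1 := condExp_const hm 1
  filter_upwards [h_nonneg, h_le_one] with ω h0 h1 using ⟨h0, h1⟩

theorem setIntegral_condExp_indicator_one (hm : m ≤ mΩ) (P : Measure Ω) [IsFiniteMeasure P]
    {A H : Set Ω} (hA : MeasurableSet A) (hH : MeasurableSet[m] H) :
    ∫ ω in H, P[A.indicator 1 | m] ω ∂P = P.real (A ∩ H) := by
  rw [setIntegral_condExp hm ((integrable_const 1).indicator hA) hH, integral_indicator_one hA,
    measureReal_restrict_apply hA]

theorem exists_isCondVersion_mem_Icc (hm : m ≤ mΩ) (P : Measure Ω) [IsFiniteMeasure P]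
    {A : Set Ω} (hA : MeasurableSet A) :
    ∃ Ψ : Ω → ℝ, (∀ ω, Ψ ω ∈ Icc (0 : ℝ) 1) ∧ IsCondVersion m P A Ψ := by
  set Ψ₀ := P[A.indicator (1 : Ω → ℝ) | m]
  refine ⟨fun ω => projIcc 0 1 zero_le_one (Ψ₀ ω), fun _ => Subtype.prop _, ?_,
    fun H hH => ?_⟩
  · exact (continuous_subtype_val.comp continuous_projIcc).measurable.comp
      stronglyMeasurable_condExp.measurable
  · have h_clamp : (fun ω => (projIcc 0 1 zero_le_one (Ψ₀ ω) : ℝ)) =ᵐ[P] Ψ₀ := by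
      filter_upwards [condExp_indicator_one_mem_Icc P hA] with ω hω
      rw [projIcc_of_mem _ hω]
    rw [integral_congr_ae (ae_restrict_of_ae h_clamp), setIntegral_condExp_indicator_one hm P hA hH]
    rfl

theorem IsCondVersion.of_forall_measurableSet_eq (hm : m ≤ mΩ) {P Q : Measure Ω} {A : Set Ω}
    {Ψ : Ω → ℝ} (hΨ : IsCondVersion m P A Ψ) (hPQ : ∀ s, MeasurableSet[m] s → P s = Q s)
    (hPQ_A : ∀ s, MeasurableSet[m] s → P (A ∩ s) = Q (A ∩ s)) : IsCondVersion m Q A Ψ := by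
  refine ⟨hΨ.1, fun H hH => ?_⟩
  rw [← hPQ_A H hH, hΨ.2 H hH,
    setIntegral_eq_of_forall_measurableSet_eq hm hPQ hΨ.1.stronglyMeasurable hH]

end MeasureTheory

theorem stmt15_general {Ω : Type} [mΩ : MeasurableSpace Ω] {m : MeasurableSpace Ω} (hm : m ≤ mΩ)
    {ΩT : Type} [mT : MeasurableSpace ΩT] (T : Ω → ΩT) (hT : @Measurable Ω ΩT m mT T)
    (A₁ : Set Ω) (hA₁ : MeasurableSet[mΩ] A₁)
    (P Q : @Measure Ω mΩ) (hP : @IsProbabilityMeasure Ω mΩ P)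
    (hb : ∀ Gs : Set Ω, MeasurableSet[mT.comap T] Gs →
      P (A₁ ∩ Gs) = Q (A₁ ∩ Gs) ∧ P Gs = Q Gs) :
    @CovShift Ω mΩ (mT.comap T) P Q A₁ := by
  have hTm : mT.comap T ≤ mΩ := hT.comap_le.trans hm
  -- `m` is a local `MeasurableSpace` instance too, so the ambient one is named explicitly.
  obtain ⟨Ψ, hΨ_mem, hΨ⟩ := exists_isCondVersion_mem_Icc (mΩ := mΩ) hTm P hA₁
  exact ⟨Ψ, hΨ_mem, hΨ, IsCondVersion.of_forall_measurableSet_eq (mΩ := mΩ) hTm hΨ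
    (fun s hs => (hb s hs).2) (fun s hs => (hb s hs).1)⟩

/-- Condition (b) alone implies covariate shift w.r.t. `σ(T)`: if `P[A₁ ∩ G] = Q[A₁ ∩ G]` and
`P[G] = Q[G]` for all `G ∈ σ(T)`, then `P` and `Q` admit a common `σ(T)`-measurable version
of the conditional probability of `A₁` given `σ(T)`. -/
theorem stmt15 {Ω : Type} [mΩ : MeasurableSpace Ω] {m : MeasurableSpace Ω} (hm : m ≤ mΩ)
    {ΩT : Type} [mT : MeasurableSpace ΩT] (T : Ω → ΩT) (hT : @Measurable Ω ΩT m mT T)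
    (A₁ : Set Ω) (hA₁ : MeasurableSet[mΩ] A₁)
    (P Q : @Measure Ω mΩ) (hP : @IsProbabilityMeasure Ω mΩ P)
    (hQ : @IsProbabilityMeasure Ω mΩ Q)
    (hb : ∀ Gs : Set Ω, MeasurableSet[mT.comap T] Gs →
      P (A₁ ∩ Gs) = Q (A₁ ∩ Gs) ∧ P Gs = Q Gs) :
    @CovShift Ω mΩ (mT.comap T) P Q A₁ :=
  stmt15_general (mΩ := mΩ) hm (mT := mT) T hT A₁ hA₁ P Q hP hb
end
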